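/- Global existence and positivity of the characteristic curves (step in the proof of Lemma 3.1). For every z₁ > 0 and every sign ε ∈ {−1, +1}, there exists a differentiable function φ : ℝ → ℝ such that φ(0) = z₁, φ(s) > 0 for all s ∈ ℝ, and φ′(s) = (s + ε·√(s² + 4 φ(s)))/2 for all s ∈ ℝ. -/

import Mathlib

/-!
The solutions are found in parametric form. Along the curve `t ↦ (s, φ) = (ε σ t, ψ t)` with
`b = √z₁`, `σ t = time b t = 2/3 b (e^{2t} - e^{-t})` and
`ψ t = value b t = b² (e^{4t} + 2 e^t) / 3`, one has
`ψ' = b e^{2t} σ'` and `σ² + 4ψ = σ'²`, so that both `dφ/ds` and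
`(s + ε √(s² + 4φ)) / 2 = ε (σ + σ') / 2` equal `ε b e^{2t}`. Since `σ` is an increasing
bijection of `ℝ` with `σ 0 = 0` and `ψ 0 = z₁`, the curve is the graph of a global solution.
-/

open Real Filter

theorem OrderIso.hasDerivAt_comp_symm (e : ℝ ≃o ℝ) {f : ℝ → ℝ} {e' k y : ℝ}
    (he : HasDerivAt e e' (e.symm y)) (he' : e' ≠ 0) (hf : HasDerivAt f (k * e') (e.symm y)) :
    HasDerivAt (fun x => f (e.symm x)) k y := by
  have hsymm : HasDerivAt e.symm e'⁻¹ y :=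
    he.of_local_left_inverse e.symm.continuous.continuousAt he'
      (Eventually.of_forall e.apply_symm_apply)
  exact (hf.comp y hsymm).congr_deriv (by rw [mul_assoc, mul_inv_cancel₀ he', mul_one])

namespace CharacteristicCurve

variable (b : ℝ)

noncomputable def time (t : ℝ) : ℝ := 2 / 3 * b * (exp (2 * t) - exp (-t))

noncomputable def timeDeriv (t : ℝ) : ℝ := 2 / 3 * b * (2 * exp (2 * t) + exp (-t))

noncomputable def value (t : ℝ) : ℝ := b ^ 2 * (exp (4 * t) + 2 * exp t) / 3

theorem exp_four_mul (t : ℝ) : exp (4 * t) = exp (2 * t) * exp (2 * t) := by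
  rw [← exp_add]; ring_nf

theorem exp_eq_exp_two_mul_mul_exp_neg (t : ℝ) : exp t = exp (2 * t) * exp (-t) := by
  rw [← exp_add]; ring_nf

theorem hasDerivAt_time (t : ℝ) : HasDerivAt (time b) (timeDeriv b t) t := by
  have h2 : HasDerivAt (fun t => exp (2 * t)) (exp (2 * t) * 2) t := by
    simpa using ((hasDerivAt_id t).const_mul 2).exp
  have h1 : HasDerivAt (fun t => exp (-t)) (exp (-t) * -1) t := (hasDerivAt_neg t).exp
  exact ((h2.fun_sub h1).const_mul _).congr_deriv (by rw [timeDeriv]; ring)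

theorem hasDerivAt_value (t : ℝ) :
    HasDerivAt (value b) (b * exp (2 * t) * timeDeriv b t) t := by
  have h4 : HasDerivAt (fun t => exp (4 * t)) (exp (4 * t) * 4) t := by
    simpa using ((hasDerivAt_id t).const_mul 4).exp
  refine (((h4.fun_add ((hasDerivAt_exp t).const_mul 2)).const_mul (b ^ 2)).div_const 3).congr_deriv
    ?_
  rw [timeDeriv, exp_four_mul, exp_eq_exp_two_mul_mul_exp_neg t]
  ring

theorem timeDeriv_pos {b : ℝ} (hb : 0 < b) (t : ℝ) : 0 < timeDeriv b t := by
  unfold timeDeriv; positivity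

theorem value_pos {b : ℝ} (hb : b ≠ 0) (t : ℝ) : 0 < value b t := by
  unfold value; positivity

theorem time_sq_add_four_mul_value (t : ℝ) :
    time b t ^ 2 + 4 * value b t = timeDeriv b t ^ 2 := by
  rw [time, value, timeDeriv, exp_four_mul, exp_eq_exp_two_mul_mul_exp_neg t]
  ring

theorem time_add_timeDeriv (t : ℝ) : time b t + timeDeriv b t = 2 * b * exp (2 * t) := by
  rw [time, timeDeriv]; ring

theorem time_zero : time b 0 = 0 := by simp [time]

theorem value_zero : value b 0 = b ^ 2 := by simp [value]; ring

theorem tendsto_time_atTop {b : ℝ} (hb : 0 < b) : Tendsto (time b) atTop atTop := by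
  have h := (tendsto_exp_atTop.comp (tendsto_id.const_mul_atTop two_pos)).atTop_add
    (tendsto_exp_atBot.comp tendsto_neg_atTop_atBot).neg
  simp only [Function.comp_def, id, ← sub_eq_add_neg] at h
  exact h.const_mul_atTop (by positivity)

theorem tendsto_time_atBot {b : ℝ} (hb : 0 < b) : Tendsto (time b) atBot atBot := by
  have h := (tendsto_exp_atBot.comp (tendsto_id.const_mul_atBot two_pos)).add_atBot
    (tendsto_neg_atTop_atBot.comp (tendsto_exp_atTop.comp tendsto_neg_atBot_atTop))
  simp only [Function.comp_def, id, ← sub_eq_add_neg] at h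
  exact h.const_mul_atBot (by positivity)

noncomputable def timeOrderIso {b : ℝ} (hb : 0 < b) : ℝ ≃o ℝ :=
  StrictMono.orderIsoOfSurjective (time b)
    (strictMono_of_hasDerivAt_pos (hasDerivAt_time b) (timeDeriv_pos hb))
    ((continuous_iff_continuousAt.2 fun t => (hasDerivAt_time b t).continuousAt).surjective
      (tendsto_time_atTop hb) (tendsto_time_atBot hb))

@[simp]
theorem coe_timeOrderIso {b : ℝ} (hb : 0 < b) : ⇑(timeOrderIso hb) = time b := rfl

theorem ode_rhs_eq {b ε : ℝ} (hb : 0 ≤ b) (hε : ε * ε = 1) (t : ℝ) :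
    (ε * time b t + ε * √((ε * time b t) ^ 2 + 4 * value b t)) / 2 = b * exp (2 * t) * ε := by
  have hσ' : 0 ≤ timeDeriv b t := by unfold timeDeriv; positivity
  rw [mul_pow, sq ε, hε, one_mul, time_sq_add_four_mul_value, sqrt_sq hσ', ← mul_add,
    time_add_timeDeriv]
  ring

end CharacteristicCurve

open CharacteristicCurve in
theorem characteristic_curves_global_exist_pos
    (z₁ : ℝ) (hz₁ : 0 < z₁) (ε : ℝ) (hε : ε = -1 ∨ ε = 1) :
    ∃ φ : ℝ → ℝ, φ 0 = z₁ ∧ (∀ s : ℝ, 0 < φ s) ∧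
      ∀ s : ℝ, HasDerivAt φ ((s + ε * Real.sqrt (s ^ 2 + 4 * φ s)) / 2) s := by
  have hb : 0 < √z₁ := sqrt_pos.2 hz₁
  have hε2 : ε * ε = 1 := by rcases hε with rfl | rfl <;> norm_num
  set e := timeOrderIso hb
  refine ⟨fun s => value √z₁ (e.symm (ε * s)), ?_, fun s => value_pos hb.ne' _, fun s => ?_⟩
  · have he0 : e.symm 0 = 0 := by rw [e.symm_apply_eq, coe_timeOrderIso, time_zero]
    simp only [mul_zero, he0, value_zero, sq_sqrt hz₁.le]
  · set t := e.symm (ε * s)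
    have hs : s = ε * time √z₁ t := by
      rw [← coe_timeOrderIso hb, e.apply_symm_apply, ← mul_assoc, hε2, one_mul]
    have hcurve := e.hasDerivAt_comp_symm (hasDerivAt_time _ t) (timeDeriv_pos hb t).ne'
      (hasDerivAt_value _ t)
    have hφ := hcurve.comp s ((hasDerivAt_id' s).const_mul ε)
    refine hφ.congr_deriv ?_
    change _ = (s + ε * √(s ^ 2 + 4 * value √z₁ t)) / 2
    rw [mul_one, hs, ode_rhs_eq hb.le hε2]
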